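/- If the asymptotic elasticity AE(U) := limsup_{x→∞} x U'(x)/U(x) is strictly less than 1, then V satisfies the Δ₂-type growth condition: there exist constants a, b > 0 such that V(y/2) ≤ a V(y) + b(y + 1) for all y > 0. -/

import Mathlib

open Set Filter Topology

/-!
If `AE(U) < 1`, pick `γ < 1` with `x U'(x) ≤ γ U(x)` for large `x`; the tangent line of the
concave `U` at `x` then gives `U(2x) ≤ (1 + γ) U(x)`, and iterating, `U(2ⁿ x) ≤ a U(x)` with
`a = (1 + γ)ⁿ ≤ 2ⁿ⁻¹` for a suitable `n`. For large `x = 2ⁿ t` this yields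
`U(x) - x y/2 ≤ a (U(t) - t y) ≤ a V(y)`, while small `x` contribute at most `U(2ⁿ x₀)`.
-/

lemma ConcaveOn.le_add_deriv_mul_sub {S : Set ℝ} {f : ℝ → ℝ} {x y : ℝ} (hf : ConcaveOn ℝ S f)
    (hx : x ∈ S) (hy : y ∈ S) (hfd : DifferentiableAt ℝ f x) :
    f y ≤ f x + deriv f x * (y - x) := by
  rcases lt_trichotomy x y with hxy | rfl | hyx
  · have h := hf.slope_le_deriv hx hy hxy hfd
    rw [slope_def_field, div_le_iff₀ (sub_pos.2 hxy)] at h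
    linarith
  · simp
  · have h := hf.deriv_le_slope hy hx hyx hfd
    rw [slope_def_field, le_div_iff₀ (sub_pos.2 hyx)] at h
    linarith

lemma StrictMonoOn.pos_of_tendsto_nhdsGT_zero {U : ℝ → ℝ} (hU : StrictMonoOn U (Ioi 0))
    (hU0 : Tendsto U (𝓝[>] 0) (𝓝 0)) {t : ℝ} (ht : 0 < t) : 0 < U t := by
  have hhalf : 0 ≤ U (t / 2) := by
    refine le_of_tendsto hU0 ?_
    filter_upwards [Ioo_mem_nhdsGT (half_pos ht)] with s hs
    exact hU.monotoneOn hs.1 (half_pos ht) hs.2.le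
  exact hhalf.trans_lt (hU (half_pos ht) ht (half_lt_self ht))

/-- The tangent line at `x` stays above `U(0+) = 0`. -/
lemma ConcaveOn.mul_deriv_le {U : ℝ → ℝ} (hU : ConcaveOn ℝ (Ioi 0) U)
    (hU0 : Tendsto U (𝓝[>] 0) (𝓝 0)) {x : ℝ} (hx : 0 < x) (hd : DifferentiableAt ℝ U x) :
    x * deriv U x ≤ U x := by
  have htangent : Tendsto (fun s => U x + deriv U x * (s - x)) (𝓝[>] 0)
      (𝓝 (U x + deriv U x * (0 - x))) :=
    (Continuous.tendsto (by fun_prop) 0).mono_left nhdsWithin_le_nhds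
  have := le_of_tendsto_of_tendsto hU0 htangent <|
    eventually_mem_nhdsWithin.mono fun s hs => hU.le_add_deriv_mul_sub hx hs hd
  linarith

lemma ConcaveOn.eventually_apply_two_mul_le {U : ℝ → ℝ} {γ : ℝ} (hU : ConcaveOn ℝ (Ioi 0) U)
    (hdiff : ∀ x > 0, DifferentiableAt ℝ U x) (hU0 : Tendsto U (𝓝[>] 0) (𝓝 0))
    (hpos : ∀ x > 0, 0 < U x) (hAE : limsup (fun x => x * deriv U x / U x) atTop < γ) :
    ∀ᶠ t in atTop, U (2 * t) ≤ (1 + γ) * U t := by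
  have hbdd : IsBoundedUnder (· ≤ ·) atTop (fun x => x * deriv U x / U x) :=
    ⟨1, eventually_map.2 <| (eventually_gt_atTop 0).mono fun x hx =>
      (div_le_one (hpos x hx)).2 (hU.mul_deriv_le hU0 hx (hdiff x hx))⟩
  filter_upwards [eventually_lt_of_limsup_lt hAE hbdd, eventually_gt_atTop 0] with t hlt ht
  rw [div_lt_iff₀ (hpos t ht)] at hlt
  have := hU.le_add_deriv_mul_sub (y := 2 * t) ht (mul_pos two_pos ht) (hdiff t ht)
  linarith

lemma Filter.Eventually.apply_two_pow_mul_le {f : ℝ → ℝ} {c : ℝ} (hc : 0 ≤ c)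
    (h : ∀ᶠ t in atTop, f (2 * t) ≤ c * f t) (n : ℕ) :
    ∀ᶠ t in atTop, f (2 ^ n * t) ≤ c ^ n * f t := by
  induction n with
  | zero => simp
  | succ n ih =>
    filter_upwards [h, (tendsto_id.const_mul_atTop two_pos).eventually ih] with t h1 h2
    calc f (2 ^ (n + 1) * t) = f (2 ^ n * (2 * t)) := by ring_nf
      _ ≤ c ^ n * f (2 * t) := h2
      _ ≤ c ^ n * (c * f t) := mul_le_mul_of_nonneg_left h1 (pow_nonneg hc n)
      _ = c ^ (n + 1) * f t := by ring

lemma exists_two_mul_pow_le_two_pow {c : ℝ} (hc : c < 2) : ∃ n : ℕ, 2 * c ^ n ≤ 2 ^ n := by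
  obtain ⟨n, hn⟩ := exists_pow_lt_of_lt_one (half_pos one_pos) (show c / 2 < 1 by linarith)
  refine ⟨n, ?_⟩
  rw [div_pow, div_lt_iff₀ (by positivity)] at hn
  linarith

/-- The conjugate `V` of the statement. `sSup` is `0` on sets unbounded above, so lower bounds
on it go through `BddAbove`. -/
noncomputable def utilityConjugate (U : ℝ → ℝ) (y : ℝ) : ℝ :=
  sSup {v : ℝ | ∃ x ∈ Ioi (0:ℝ), v = U x - x * y}

lemma sub_mul_le_utilityConjugate {U : ℝ → ℝ} (hU : ConcaveOn ℝ (Ioi 0) U)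
    (hdiff : ∀ x > 0, DifferentiableAt ℝ U x) (hInfty : Tendsto (deriv U) atTop (𝓝 0))
    {x y : ℝ} (hx : 0 < x) (hy : 0 < y) : U x - x * y ≤ utilityConjugate U y := by
  obtain ⟨z, hzy, hz⟩ := ((hInfty.eventually (gt_mem_nhds hy)).and (eventually_gt_atTop 0)).exists
  refine le_csSup ⟨U z - z * deriv U z, ?_⟩ ⟨x, hx, rfl⟩
  rintro _ ⟨w, hw, rfl⟩
  have := hU.le_add_deriv_mul_sub hz hw (hdiff z hz)
  linarith [mul_le_mul_of_nonneg_left hzy.le (le_of_lt hw)]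

lemma utilityConjugate_nonneg {U : ℝ → ℝ} (hU0 : Tendsto U (𝓝[>] 0) (𝓝 0)) {y : ℝ}
    (hle : ∀ x > 0, U x - x * y ≤ utilityConjugate U y) : 0 ≤ utilityConjugate U y := by
  have hlim : Tendsto (fun x => U x - x * y) (𝓝[>] 0) (𝓝 0) := by
    simpa using hU0.sub ((Continuous.tendsto (by fun_prop) 0).mono_left nhdsWithin_le_nhds :
      Tendsto (fun x : ℝ => x * y) (𝓝[>] 0) (𝓝 (0 * y)))
  exact le_of_tendsto hlim <| eventually_mem_nhdsWithin.mono hle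

lemma utilityConjugate_half_le {U : ℝ → ℝ} {a x₀ y : ℝ} {n : ℕ}
    (hmono : MonotoneOn U (Ioi 0)) (hx₀ : 0 < x₀) (ha : 0 ≤ a) (han : 2 * a ≤ 2 ^ n)
    (hdouble : ∀ t ≥ x₀, U (2 ^ n * t) ≤ a * U t) (hb : 0 ≤ U (2 ^ n * x₀))
    (hle : ∀ x > 0, U x - x * y ≤ utilityConjugate U y) (hnonneg : 0 ≤ utilityConjugate U y)
    (hy : 0 < y) :
    utilityConjugate U (y / 2) ≤ a * utilityConjugate U y + U (2 ^ n * x₀) := by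
  refine csSup_le ⟨_, 1, mem_Ioi.2 one_pos, rfl⟩ ?_
  rintro _ ⟨x, hx, rfl⟩
  rcases le_or_gt x (2 ^ n * x₀) with hxX | hXx
  · have := hmono hx (by simp only [mem_Ioi]; positivity) hxX
    linarith [mul_pos (mem_Ioi.1 hx) hy, mul_nonneg ha hnonneg]
  · set t := x / 2 ^ n
    have ht : x₀ < t := (lt_div_iff₀ (by positivity)).2 (by linarith)
    have hxt : x = 2 ^ n * t := (mul_div_cancel₀ x (by positivity)).symm
    have hty : a * (t * y) ≤ 2 ^ n * t * (y / 2) := by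
      linarith [mul_le_mul_of_nonneg_right han (mul_pos (hx₀.trans ht) hy).le]
    calc U x - x * (y / 2) ≤ a * (U t - t * y) := by
          rw [hxt]; linarith [hdouble t ht.le]
      _ ≤ a * utilityConjugate U y := mul_le_mul_of_nonneg_left (hle t (hx₀.trans ht)) ha
      _ ≤ a * utilityConjugate U y + U (2 ^ n * x₀) := le_add_of_nonneg_right hb

theorem asymptoticElasticity_implies_Delta2_general (U V : ℝ → ℝ)
    (hU_mono : StrictMonoOn U (Ioi 0))
    (hU_conc : StrictConcaveOn ℝ (Ioi 0) U)
    (hU_diff : ContDiffOn ℝ 1 U (Ioi 0))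
    (hInadaInfty : Tendsto (deriv U) atTop (nhds 0))
    (hU0 : Tendsto U (nhdsWithin 0 (Ioi 0)) (nhds 0))
    (hV : ∀ y ∈ Ioi (0:ℝ), V y = sSup {v : ℝ | ∃ x ∈ Ioi (0:ℝ), v = U x - x * y})
    (hAE : Filter.limsup (fun x => x * deriv U x / U x) atTop < 1) :
    ∃ a b : ℝ, 0 < a ∧ 0 < b ∧ ∀ y > 0, V (y / 2) ≤ a * V y + b * (y + 1) := by
  have hconc := hU_conc.concaveOn
  have hdiff : ∀ x > 0, DifferentiableAt ℝ U x := fun x hx =>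
    (hU_diff.differentiableOn one_ne_zero).differentiableAt (isOpen_Ioi.mem_nhds hx)
  have hpos : ∀ x > 0, 0 < U x := fun x hx => hU_mono.pos_of_tendsto_nhdsGT_zero hU0 hx
  have hle : ∀ y > 0, ∀ x > 0, U x - x * y ≤ utilityConjugate U y := fun y hy x hx =>
    sub_mul_le_utilityConjugate hconc hdiff hInadaInfty hx hy
  obtain ⟨γ, hγ, hγ1⟩ := exists_between (max_lt hAE zero_lt_one)
  obtain ⟨n, hn⟩ := exists_two_mul_pow_le_two_pow (show 1 + γ < 2 by linarith)
  have hγ0 : 0 < 1 + γ := by linarith [(le_max_right _ _).trans_lt hγ]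
  obtain ⟨x₀, hx₀⟩ := eventually_atTop.1 <|
    ((hconc.eventually_apply_two_mul_le hdiff hU0 hpos ((le_max_left _ _).trans_lt hγ)
      ).apply_two_pow_mul_le hγ0.le n).and (eventually_gt_atTop 0)
  have hx₀pos : 0 < x₀ := (hx₀ x₀ le_rfl).2
  have hb : 0 < U (2 ^ n * x₀) := hpos _ (by positivity)
  refine ⟨(1 + γ) ^ n, U (2 ^ n * x₀), pow_pos hγ0 n, hb, fun y hy => ?_⟩
  have hVU : ∀ y > 0, V y = utilityConjugate U y := hV
  rw [hVU y hy, hVU (y / 2) (half_pos hy)]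
  have hnonneg := utilityConjugate_nonneg hU0 (hle y hy)
  calc utilityConjugate U (y / 2) ≤ (1 + γ) ^ n * utilityConjugate U y + U (2 ^ n * x₀) :=
        utilityConjugate_half_le hU_mono.monotoneOn hx₀pos (pow_pos hγ0 n).le hn
          (fun t ht => (hx₀ t ht).1) hb.le (hle y hy) hnonneg hy
    _ ≤ _ := add_le_add_right (le_mul_of_one_le_right hb.le (by linarith)) _

/-- If the asymptotic elasticity `AE(U) = limsup_{x→∞} x U'(x)/U(x)` is strictly less
than `1`, then the conjugate `V` satisfies a Δ₂-type growth condition: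
there exist `a, b > 0` with `V(y/2) ≤ a V(y) + b (y+1)` for all `y > 0`. -/
theorem asymptoticElasticity_implies_Delta2 (U V : ℝ → ℝ)
    (hU_mono : StrictMonoOn U (Ioi 0))
    (hU_conc : StrictConcaveOn ℝ (Ioi 0) U)
    (hU_diff : ContDiffOn ℝ 1 U (Ioi 0))
    (hInada0 : Tendsto (deriv U) (nhdsWithin 0 (Ioi 0)) atTop)
    (hInadaInfty : Tendsto (deriv U) atTop (nhds 0))
    (hU0 : Tendsto U (nhdsWithin 0 (Ioi 0)) (nhds 0))
    (hV : ∀ y ∈ Ioi (0:ℝ), V y = sSup {v : ℝ | ∃ x ∈ Ioi (0:ℝ), v = U x - x * y})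
    (hAE : Filter.limsup (fun x => x * deriv U x / U x) atTop < 1) :
    ∃ a b : ℝ, 0 < a ∧ 0 < b ∧ ∀ y > 0, V (y / 2) ≤ a * V y + b * (y + 1) :=
  asymptoticElasticity_implies_Delta2_general U V hU_mono hU_conc hU_diff hInadaInfty hU0 hV hAE
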